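/- Let a(t,x) be a symmetric d×d-matrix-valued function on [0,∞)×ℝ^d with Λ^{−1}I ≤ a(t,x) ≤ ΛI for a constant Λ > 0, and suppose for each R > 0 there is a continuous nondecreasing ρ_R with ρ_R(0) = 0 and sup_t max_{i,j} |a_{ij}(t,x) − a_{ij}(t,y)| ≤ ρ_R(|x−y|) for x, y ∈ B(0;R). Let σ(t,x) be the symmetric positive-semidefinite square root of a(t,x). Then Λ^{−1/2} I ≤ σ(t,x) ≤ Λ^{1/2} I, and there exists a constant C depending only on Λ (and d) such that sup_{t≥0} sup_{i,j} |σ_{ij}(t,x) − σ_{ij}(t,y)| ≤ C ρ_R(|x−y|) for all x, y ∈ B(0;R). -/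

import Mathlib

/-!
The square root acts on eigenvalues, so `Λ⁻¹ I ≤ a ≤ Λ I` gives `Λ^{-1/2} I ≤ σ ≤ Λ^{1/2} I`.
For the modulus, let `P = σ(t,x)`, `Q = σ(t,y)` and let `(P - Q) u = μ u` with `|u| = 1`.
Since `2 (P² - Q²) = (P - Q)(P + Q) + (P + Q)(P - Q)` and `P - Q` is symmetric,
`⟨u, (a(t,x) - a(t,y)) u⟩ = μ ⟨u, (P + Q) u⟩`, and `P + Q ≥ 2 Λ^{-1/2} I`; so every eigenvalue of
`P - Q` is bounded in absolute value by `√Λ / 2` times the quadratic-form norm of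
`a(t,x) - a(t,y)`. Entries and quadratic-form norms of symmetric matrices agree up to a factor
`d`, whence `C = d √Λ / 2`.
-/

open MeasureTheory Filter Set
open scoped ENNReal Topology

noncomputable section

abbrev EV (d : ℕ) := EuclideanSpace ℝ (Fin d)

section

open scoped ComplexOrder

def Matrix.PosSemidef.sqrt {n : Type*} [Fintype n] [DecidableEq n] {𝕜 : Type*} [RCLike 𝕜]
    {A : Matrix n n 𝕜} (hA : A.PosSemidef) : Matrix n n 𝕜 :=
  hA.1.eigenvectorUnitary.1 * Matrix.diagonal ((↑) ∘ (√·) ∘ hA.1.eigenvalues) *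
  (star hA.1.eigenvectorUnitary : Matrix n n 𝕜)

end

namespace Matrix

variable {n : Type*} [Fintype n]

theorem sum_sum_mul_mul_eq_dotProduct_mulVec (A : Matrix n n ℝ) (v : n → ℝ) :
    ∑ i, ∑ j, A i j * v i * v j = v ⬝ᵥ A *ᵥ v := by
  simp only [dotProduct, mulVec, Finset.mul_sum]
  exact Finset.sum_congr rfl fun i _ => Finset.sum_congr rfl fun j _ => by ring

theorem sum_sq_eq_dotProduct_self (v : n → ℝ) : ∑ i, v i ^ 2 = v ⬝ᵥ v := by
  simp only [dotProduct, sq]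

theorem dotProduct_mulVec_eq_mulVec_dotProduct {A : Matrix n n ℝ} (hA : A.IsHermitian)
    (u w : n → ℝ) : u ⬝ᵥ A *ᵥ w = A *ᵥ u ⬝ᵥ w := by
  rw [dotProduct_mulVec, ← vecMul_transpose, ← conjTranspose_eq_transpose_of_trivial, hA.eq]

theorem abs_dotProduct_mulVec_le_of_abs_apply_le {A : Matrix n n ℝ} {r : ℝ} (hr : 0 ≤ r)
    (hA : ∀ i j, |A i j| ≤ r) (v : n → ℝ) :
    |v ⬝ᵥ A *ᵥ v| ≤ r * Fintype.card n * (v ⬝ᵥ v) := by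
  rw [← sum_sum_mul_mul_eq_dotProduct_mulVec, ← sum_sq_eq_dotProduct_self]
  calc |∑ i, ∑ j, A i j * v i * v j| ≤ ∑ i, ∑ j, r * |v i| * |v j| := by
        refine (Finset.abs_sum_le_sum_abs _ _).trans (Finset.sum_le_sum fun i _ => ?_)
        refine (Finset.abs_sum_le_sum_abs _ _).trans (Finset.sum_le_sum fun j _ => ?_)
        rw [abs_mul, abs_mul]
        gcongr
        exact hA i j
    _ = r * (∑ i, |v i|) ^ 2 := by
        rw [sq, Finset.sum_mul_sum, Finset.mul_sum]
        simp only [Finset.mul_sum, mul_assoc]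
    _ ≤ r * (Fintype.card n * ∑ i, |v i| ^ 2) := by
        gcongr
        exact sq_sum_le_card_mul_sum_sq
    _ = r * Fintype.card n * ∑ i, v i ^ 2 := by simp only [sq_abs, mul_assoc]

variable [DecidableEq n]

theorem abs_apply_le_of_abs_dotProduct_mulVec_le {A : Matrix n n ℝ} (hA : A.IsHermitian)
    {K : ℝ} (hK : ∀ v, |v ⬝ᵥ A *ᵥ v| ≤ K * (v ⬝ᵥ v)) (i j : n) : |A i j| ≤ K := by
  set p : n → ℝ := Pi.single i 1 + Pi.single j 1
  set q : n → ℝ := Pi.single i 1 - Pi.single j 1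
  have hsymm : A j i = A i j := by simpa using hA.apply i j
  have hpq : p ⬝ᵥ A *ᵥ p - q ⬝ᵥ A *ᵥ q = 4 * A i j := by
    simp only [p, q, mulVec_add, mulVec_sub, dotProduct_add, dotProduct_sub, add_dotProduct,
      sub_dotProduct, mulVec_single_one, single_dotProduct, one_mul, col_apply, hsymm]
    ring
  have hnorm : p ⬝ᵥ p + q ⬝ᵥ q = 4 := by
    simp only [p, q, dotProduct_add, dotProduct_sub, add_dotProduct, sub_dotProduct,
      single_dotProduct, one_mul, Pi.single_eq_same]
    ring
  have : 4 * |A i j| ≤ 4 * K := calc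
    4 * |A i j| = |p ⬝ᵥ A *ᵥ p - q ⬝ᵥ A *ᵥ q| := by
      rw [hpq, abs_mul, abs_of_pos (four_pos (α := ℝ))]
    _ ≤ |p ⬝ᵥ A *ᵥ p| + |q ⬝ᵥ A *ᵥ q| := abs_sub _ _
    _ ≤ K * (p ⬝ᵥ p) + K * (q ⬝ᵥ q) := add_le_add (hK p) (hK q)
    _ = 4 * K := by rw [← mul_add, hnorm, mul_comm]
  linarith

theorem star_mulVec_dotProduct_star_mulVec {U : Matrix n n ℝ} (hU : U ∈ unitaryGroup n ℝ)
    (v : n → ℝ) : star U *ᵥ v ⬝ᵥ star U *ᵥ v = v ⬝ᵥ v := by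
  rw [dotProduct_mulVec, star_eq_conjTranspose, conjTranspose_eq_transpose_of_trivial,
    vecMul_transpose, mulVec_mulVec, ← conjTranspose_eq_transpose_of_trivial,
    ← star_eq_conjTranspose, mem_unitaryGroup_iff.mp hU, one_mulVec]

theorem dotProduct_mulVec_conj_diagonal (U : Matrix n n ℝ) (g : n → ℝ) (v : n → ℝ) :
    v ⬝ᵥ (U * diagonal g * star U) *ᵥ v = ∑ k, g k * (star U *ᵥ v) k ^ 2 := by
  rw [← mulVec_mulVec, ← mulVec_mulVec, dotProduct_mulVec, star_eq_conjTranspose,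
    conjTranspose_eq_transpose_of_trivial, ← mulVec_transpose]
  simp only [dotProduct, mulVec_diagonal]
  exact Finset.sum_congr rfl fun k _ => by ring

section Unitary

variable {U : Matrix n n ℝ} (hU : U ∈ unitaryGroup n ℝ) {g : n → ℝ}
include hU

theorem le_dotProduct_mulVec_conj_diagonal {m : ℝ} (hg : ∀ k, m ≤ g k) (v : n → ℝ) :
    m * (v ⬝ᵥ v) ≤ v ⬝ᵥ (U * diagonal g * star U) *ᵥ v := by
  rw [dotProduct_mulVec_conj_diagonal, ← star_mulVec_dotProduct_star_mulVec hU v,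
    ← sum_sq_eq_dotProduct_self, Finset.mul_sum]
  gcongr with k
  exact hg k

theorem dotProduct_mulVec_conj_diagonal_le {M : ℝ} (hg : ∀ k, g k ≤ M) (v : n → ℝ) :
    v ⬝ᵥ (U * diagonal g * star U) *ᵥ v ≤ M * (v ⬝ᵥ v) := by
  rw [dotProduct_mulVec_conj_diagonal, ← star_mulVec_dotProduct_star_mulVec hU v,
    ← sum_sq_eq_dotProduct_self, Finset.mul_sum]
  gcongr with k
  exact hg k

end Unitary

namespace IsHermitian

variable {A : Matrix n n ℝ} (hA : A.IsHermitian)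
include hA

theorem eq_conj_diagonal_eigenvalues :
    A = hA.eigenvectorUnitary * diagonal hA.eigenvalues *
      star (hA.eigenvectorUnitary : Matrix n n ℝ) := by
  simpa [RCLike.ofReal_real_eq_id] using hA.spectral_theorem

theorem dotProduct_self_eigenvectorBasis (k : n) :
    ⇑(hA.eigenvectorBasis k) ⬝ᵥ ⇑(hA.eigenvectorBasis k) = 1 := by
  have h := hA.eigenvectorBasis.inner_eq_one k
  rwa [EuclideanSpace.inner_eq_star_dotProduct, star_trivial] at h

theorem eigenvalues_eq_dotProduct_mulVec (k : n) :
    hA.eigenvalues k = ⇑(hA.eigenvectorBasis k) ⬝ᵥ A *ᵥ ⇑(hA.eigenvectorBasis k) := by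
  simpa using hA.eigenvalues_eq k

theorem le_eigenvalues {m : ℝ} (hm : ∀ v, m * (v ⬝ᵥ v) ≤ v ⬝ᵥ A *ᵥ v) (k : n) :
    m ≤ hA.eigenvalues k := by
  simpa [hA.dotProduct_self_eigenvectorBasis, ← hA.eigenvalues_eq_dotProduct_mulVec]
    using hm (hA.eigenvectorBasis k)

theorem eigenvalues_le {M : ℝ} (hM : ∀ v, v ⬝ᵥ A *ᵥ v ≤ M * (v ⬝ᵥ v)) (k : n) :
    hA.eigenvalues k ≤ M := by
  simpa [hA.dotProduct_self_eigenvectorBasis, ← hA.eigenvalues_eq_dotProduct_mulVec]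
    using hM (hA.eigenvectorBasis k)

theorem abs_dotProduct_mulVec_le_of_abs_eigenvalues_le {K : ℝ}
    (hK : ∀ k, |hA.eigenvalues k| ≤ K) (v : n → ℝ) : |v ⬝ᵥ A *ᵥ v| ≤ K * (v ⬝ᵥ v) := by
  have hU := hA.eigenvectorUnitary.2
  rw [hA.eq_conj_diagonal_eigenvalues, abs_le, ← neg_mul]
  exact ⟨le_dotProduct_mulVec_conj_diagonal hU (fun k => (abs_le.1 (hK k)).1) v,
    dotProduct_mulVec_conj_diagonal_le hU (fun k => (abs_le.1 (hK k)).2) v⟩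

end IsHermitian

namespace PosSemidef

variable {A : Matrix n n ℝ} (hA : A.PosSemidef)
include hA

theorem sqrt_eq_conj_diagonal :
    hA.sqrt = hA.1.eigenvectorUnitary * diagonal (fun k => √(hA.1.eigenvalues k)) *
      star (hA.1.eigenvectorUnitary : Matrix n n ℝ) :=
  rfl

theorem sqrt_mul_self : hA.sqrt * hA.sqrt = A := by
  set U : Matrix n n ℝ := ↑hA.1.eigenvectorUnitary
  have hU : star U * U = 1 := Unitary.star_mul_self_of_mem hA.1.eigenvectorUnitary.2
  conv_rhs => rw [hA.1.eq_conj_diagonal_eigenvalues]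
  calc hA.sqrt * hA.sqrt = U * (diagonal (fun k => √(hA.1.eigenvalues k)) * (star U * U) *
        diagonal (fun k => √(hA.1.eigenvalues k))) * star U := by
        simp only [sqrt_eq_conj_diagonal, U, mul_assoc]
    _ = U * diagonal hA.1.eigenvalues * star U := by
        rw [hU, mul_one, diagonal_mul_diagonal]
        simp only [Real.mul_self_sqrt (hA.eigenvalues_nonneg _)]

theorem isHermitian_sqrt : hA.sqrt.IsHermitian := by
  rw [isHermitian_iff_isSymm, IsSymm, sqrt_eq_conj_diagonal]
  simp [transpose_mul, star_eq_conjTranspose, conjTranspose_eq_transpose_of_trivial, mul_assoc]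

theorem le_dotProduct_sqrt_mulVec {m : ℝ} (hm : ∀ v, m * (v ⬝ᵥ v) ≤ v ⬝ᵥ A *ᵥ v) (v : n → ℝ) :
    √m * (v ⬝ᵥ v) ≤ v ⬝ᵥ hA.sqrt *ᵥ v :=
  le_dotProduct_mulVec_conj_diagonal hA.1.eigenvectorUnitary.2
    (fun k => Real.sqrt_le_sqrt (hA.1.le_eigenvalues hm k)) v

theorem dotProduct_sqrt_mulVec_le {M : ℝ} (hM : ∀ v, v ⬝ᵥ A *ᵥ v ≤ M * (v ⬝ᵥ v)) (v : n → ℝ) :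
    v ⬝ᵥ hA.sqrt *ᵥ v ≤ √M * (v ⬝ᵥ v) :=
  dotProduct_mulVec_conj_diagonal_le hA.1.eigenvectorUnitary.2
    (fun k => Real.sqrt_le_sqrt (hA.1.eigenvalues_le hM k)) v

end PosSemidef

section SqrtPerturbation

variable {P Q : Matrix n n ℝ} (hP : P.IsHermitian) (hQ : Q.IsHermitian)
include hP hQ

theorem dotProduct_mul_self_sub_mul_self_mulVec {μ : ℝ} {u : n → ℝ}
    (hu : (P - Q) *ᵥ u = μ • u) :
    u ⬝ᵥ (P * P - Q * Q) *ᵥ u = μ * (u ⬝ᵥ (P + Q) *ᵥ u) := by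
  have hsplit : (P * P - Q * Q) + (P * P - Q * Q) = (P - Q) * (P + Q) + (P + Q) * (P - Q) := by
    noncomm_ring
  have hleft : u ⬝ᵥ ((P - Q) * (P + Q)) *ᵥ u = μ * (u ⬝ᵥ (P + Q) *ᵥ u) := by
    rw [← mulVec_mulVec, dotProduct_mulVec_eq_mulVec_dotProduct (hP.sub hQ), hu, smul_dotProduct,
      smul_eq_mul]
  have hright : u ⬝ᵥ ((P + Q) * (P - Q)) *ᵥ u = μ * (u ⬝ᵥ (P + Q) *ᵥ u) := by
    rw [← mulVec_mulVec, hu, mulVec_smul, dotProduct_smul, smul_eq_mul]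
  have := congrArg (fun M => u ⬝ᵥ M *ᵥ u) hsplit
  rw [add_mulVec, add_mulVec, dotProduct_add, dotProduct_add, hleft, hright] at this
  linarith

variable {c K : ℝ} (hc : 0 < c) (hPc : ∀ v, c * (v ⬝ᵥ v) ≤ v ⬝ᵥ P *ᵥ v)
  (hQc : ∀ v, c * (v ⬝ᵥ v) ≤ v ⬝ᵥ Q *ᵥ v) (hK : ∀ v, |v ⬝ᵥ (P * P - Q * Q) *ᵥ v| ≤ K * (v ⬝ᵥ v))
include hc hPc hQc hK

theorem abs_eigenvalues_sub_le (k : n) : |(hP.sub hQ).eigenvalues k| ≤ K / (2 * c) := by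
  set u : n → ℝ := ⇑((hP.sub hQ).eigenvectorBasis k)
  have hu : u ⬝ᵥ u = 1 := (hP.sub hQ).dotProduct_self_eigenvectorBasis k
  have hPQ : 2 * c ≤ u ⬝ᵥ (P + Q) *ᵥ u := by
    have hPu := hPc u
    have hQu := hQc u
    rw [hu, mul_one] at hPu hQu
    rw [add_mulVec, dotProduct_add]
    linarith
  rw [le_div_iff₀ (by positivity)]
  calc |(hP.sub hQ).eigenvalues k| * (2 * c)
      ≤ |(hP.sub hQ).eigenvalues k| * (u ⬝ᵥ (P + Q) *ᵥ u) := by gcongr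
    _ = |u ⬝ᵥ (P * P - Q * Q) *ᵥ u| := by
        rw [dotProduct_mul_self_sub_mul_self_mulVec hP hQ ((hP.sub hQ).mulVec_eigenvectorBasis k),
          abs_mul, abs_of_pos (show 0 < u ⬝ᵥ (P + Q) *ᵥ u by linarith)]
    _ ≤ K := by simpa [hu] using hK u

theorem abs_dotProduct_sub_mulVec_le (v : n → ℝ) :
    |v ⬝ᵥ (P - Q) *ᵥ v| ≤ K / (2 * c) * (v ⬝ᵥ v) :=
  (hP.sub hQ).abs_dotProduct_mulVec_le_of_abs_eigenvalues_le
    (abs_eigenvalues_sub_le hP hQ hc hPc hQc hK) v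

end SqrtPerturbation

end Matrix

open Matrix in
/-- **Properties of the square root of the diffusion matrix.** Let `a(t,x)` be a symmetric
`d×d`-matrix-valued function on `[0,∞)×ℝ^d` with `Λ⁻¹ I ≤ a(t,x) ≤ Λ I` (as quadratic forms),
and assume for each `R > 0` a modulus of continuity `ρ_R` as in the hypotheses below. Let
`σ(t,x)` be the symmetric positive semidefinite square root of `a(t,x)`. Then
`Λ^{-1/2} I ≤ σ(t,x) ≤ Λ^{1/2} I`, and there is a constant `C` depending only on `Λ` (and `d`)
with `sup_{t ≥ 0} sup_{i,j} |σ_{ij}(t,x) − σ_{ij}(t,y)| ≤ C ρ_R(|x−y|)` for `x, y ∈ B(0;R)`. -/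
theorem matrix_sqrt_elliptic_and_modulus
    (d : ℕ) (hd : 1 ≤ d) (Λ : ℝ) (hΛ : 0 < Λ) :
    ∃ C > 0,
      ∀ a : ℝ → EV d → Matrix (Fin d) (Fin d) ℝ,
      ∀ hpsd : ∀ t x, (a t x).PosSemidef,
      (∀ t x, 0 ≤ t → (a t x).IsSymm) →
      (∀ t x (v : Fin d → ℝ), 0 ≤ t →
        Λ⁻¹ * ∑ i, v i ^ 2 ≤ ∑ i, ∑ j, a t x i j * v i * v j) →
      (∀ t x (v : Fin d → ℝ), 0 ≤ t →
        ∑ i, ∑ j, a t x i j * v i * v j ≤ Λ * ∑ i, v i ^ 2) →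
      -- `Λ^{-1/2} I ≤ σ(t,x) ≤ Λ^{1/2} I` as quadratic forms:
      ((∀ t x (v : Fin d → ℝ), 0 ≤ t →
          (Real.sqrt Λ)⁻¹ * ∑ i, v i ^ 2
              ≤ ∑ i, ∑ j, (hpsd t x).sqrt i j * v i * v j
          ∧ ∑ i, ∑ j, (hpsd t x).sqrt i j * v i * v j
              ≤ Real.sqrt Λ * ∑ i, v i ^ 2)
      -- and `σ` inherits the modulus of continuity `ρ_R` up to the factor `C`:
      ∧ ∀ R : ℝ, 0 < R → ∀ ρ : ℝ → ℝ, Continuous ρ → Monotone ρ → ρ 0 = 0 →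
          (∀ t x y, 0 ≤ t → ‖x‖ < R → ‖y‖ < R →
            ∀ i j, |a t x i j - a t y i j| ≤ ρ ‖x - y‖) →
          ∀ t x y, 0 ≤ t → ‖x‖ < R → ‖y‖ < R →
            ∀ i j, |(hpsd t x).sqrt i j - (hpsd t y).sqrt i j| ≤ C * ρ ‖x - y‖) := by
  have hd_pos : (0 : ℝ) < d := by exact_mod_cast hd
  refine ⟨d * √Λ / 2, by positivity, fun a hpsd _ hlo hhi => ?_⟩
  simp only [sum_sum_mul_mul_eq_dotProduct_mulVec, sum_sq_eq_dotProduct_self] at hlo hhi ⊢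
  have hσlo : ∀ t x v, 0 ≤ t → (√Λ)⁻¹ * (v ⬝ᵥ v) ≤ v ⬝ᵥ (hpsd t x).sqrt *ᵥ v := fun t x v ht => by
    simpa [Real.sqrt_inv] using (hpsd t x).le_dotProduct_sqrt_mulVec (hlo t x · ht) v
  refine ⟨fun t x v ht =>
    ⟨hσlo t x v ht, (hpsd t x).dotProduct_sqrt_mulVec_le (hhi t x · ht) v⟩, ?_⟩
  intro R _ ρ _ hρ_mono hρ0 hmod t x y ht hx hy i j
  have hρ : 0 ≤ ρ ‖x - y‖ := hρ0 ▸ hρ_mono (norm_nonneg _)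
  have ha : ∀ v, |v ⬝ᵥ ((hpsd t x).sqrt * (hpsd t x).sqrt - (hpsd t y).sqrt * (hpsd t y).sqrt) *ᵥ v|
      ≤ ρ ‖x - y‖ * d * (v ⬝ᵥ v) := by
    rw [(hpsd t x).sqrt_mul_self, (hpsd t y).sqrt_mul_self]
    simpa using abs_dotProduct_mulVec_le_of_abs_apply_le (A := a t x - a t y) hρ
      (fun i j => by simpa using hmod t x y ht hx hy i j)
  have hσ := abs_apply_le_of_abs_dotProduct_mulVec_le
    ((hpsd t x).isHermitian_sqrt.sub (hpsd t y).isHermitian_sqrt)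
    (abs_dotProduct_sub_mulVec_le (hpsd t x).isHermitian_sqrt (hpsd t y).isHermitian_sqrt
      (by positivity) (hσlo t x · ht) (hσlo t y · ht) ha) i j
  calc |(hpsd t x).sqrt i j - (hpsd t y).sqrt i j| ≤ ρ ‖x - y‖ * d / (2 * (√Λ)⁻¹) := hσ
    _ = d * √Λ / 2 * ρ ‖x - y‖ := by field_simp
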